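/- For the parametric curve of the previous construction, dz/dθ = -(σ²/2) · z(θ)(1 - (4/3)μθ^{1/3}) / (θ(1 - (σ²/2)(1 - μθ^{1/3}))) holds, i.e. z(θ) = c₁ (1 - (σ²/2)(1 - μθ^{1/3}))^{1+3γ} θ^{-σ²γ/2} with γ = (1-σ²/2)^{-1} solves this linear first-order ODE in θ. -/

import Mathlib

/-- The real cube root. -/
noncomputable def cbrt (x : ℝ) : ℝ :=
  if 0 ≤ x then x ^ ((1:ℝ)/3) else -((-x) ^ ((1:ℝ)/3))

/-- Parametric solution, z-component:
z(θ) = c₁ (1 - (σ²/2)(1 - μθ^{1/3}))^{1+3γ} θ^{-σ²γ/2}, γ = (1-σ²/2)⁻¹. -/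
noncomputable def zpar (σ μ c₁ θ : ℝ) : ℝ :=
  c₁ * (1 - σ^2/2 * (1 - μ * cbrt θ)) ^ (1 + 3 * (1 - σ^2/2)⁻¹)
    * θ ^ (-(σ^2 * (1 - σ^2/2)⁻¹ / 2))

/-- Parametric solution, v-component: v(θ) = -(σ²/2) z(θ)(θ - μθ^{4/3}). -/
noncomputable def vpar (σ μ c₁ θ : ℝ) : ℝ :=
  -(σ^2/2) * zpar σ μ c₁ θ * (θ - μ * (θ * cbrt θ))

/-- z(θ) solves dz/dθ = -(σ²/2) z (1 - (4/3)μθ^{1/3}) / (θ(1 - (σ²/2)(1 - μθ^{1/3}))). -/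
theorem zpar_solves_linear_ode (σ μ c₁ : ℝ) (hσ : 0 < σ) (hμ : 0 < μ)
    (h2 : σ^2 ≠ 2) :
    ∀ θ : ℝ, 0 < θ → 0 < 1 - σ^2/2 * (1 - μ * cbrt θ) →
      deriv (zpar σ μ c₁) θ
        = -(σ^2/2) * zpar σ μ c₁ θ * (1 - (4/3) * μ * cbrt θ)
            / (θ * (1 - σ^2/2 * (1 - μ * cbrt θ))) := by
  intro θ hθ hA
  have hcb : cbrt θ = θ ^ ((1:ℝ)/3) := if_pos hθ.le
  set p : ℝ := 1 + 3 * (1 - σ^2/2)⁻¹ with hp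
  set q : ℝ := -(σ^2 * (1 - σ^2/2)⁻¹ / 2) with hq
  have hApos : 0 < 1 - σ^2/2 * (1 - μ * θ ^ ((1:ℝ)/3)) := by rwa [hcb] at hA
  -- derivative of x ↦ x^(1/3)
  have h13 : HasDerivAt (fun x : ℝ => x ^ ((1:ℝ)/3)) (((1:ℝ)/3) * θ ^ ((1:ℝ)/3 - 1)) θ :=
    Real.hasDerivAt_rpow_const (Or.inl hθ.ne')
  have hAd : HasDerivAt (fun x : ℝ => 1 - σ^2/2 * (1 - μ * x ^ ((1:ℝ)/3)))
      (σ^2/2 * (μ * (((1:ℝ)/3) * θ ^ ((1:ℝ)/3 - 1)))) θ := by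
    have := (((h13.const_mul μ).const_sub 1).const_mul (σ^2/2)).const_sub 1
    exact this.congr_deriv (by ring)
  have hApow : HasDerivAt (fun x : ℝ => (1 - σ^2/2 * (1 - μ * x ^ ((1:ℝ)/3))) ^ p)
      ((σ^2/2 * (μ * (((1:ℝ)/3) * θ ^ ((1:ℝ)/3 - 1)))) * p
        * (1 - σ^2/2 * (1 - μ * θ ^ ((1:ℝ)/3))) ^ (p - 1)) θ :=
    hAd.rpow_const (Or.inl hApos.ne')
  have hθpow : HasDerivAt (fun x : ℝ => x ^ q) (q * θ ^ (q - 1)) θ :=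
    Real.hasDerivAt_rpow_const (Or.inl hθ.ne')
  have hf := (hApow.mul hθpow).const_mul c₁
  have hev : zpar σ μ c₁ =ᶠ[nhds θ]
      fun x : ℝ => c₁ * ((1 - σ^2/2 * (1 - μ * x ^ ((1:ℝ)/3))) ^ p * x ^ q) := by
    filter_upwards [eventually_gt_nhds hθ] with x hx
    simp [zpar, cbrt, hx.le, hp, hq, mul_assoc]
  have hderiv : deriv (zpar σ μ c₁) θ
      = c₁ * ((σ^2/2 * (μ * (((1:ℝ)/3) * θ ^ ((1:ℝ)/3 - 1))) * p
          * (1 - σ^2/2 * (1 - μ * θ ^ ((1:ℝ)/3))) ^ (p - 1)) * θ ^ q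
        + (1 - σ^2/2 * (1 - μ * θ ^ ((1:ℝ)/3))) ^ p * (q * θ ^ (q - 1))) := by
    rw [hev.deriv_eq]; exact hf.deriv
  rw [hderiv, hcb]
  set t : ℝ := θ ^ ((1:ℝ)/3) with ht
  set A : ℝ := 1 - σ^2/2 * (1 - μ * t) with hAdef
  have hzpar : zpar σ μ c₁ θ = c₁ * A ^ p * θ ^ q := by
    simp [zpar, hcb, hp, hq, hAdef]
  rw [hzpar]
  have hAne : A ≠ 0 := hApos.ne'
  have hAp : A ^ p = A ^ (p - 1) * A := by
    rw [← Real.rpow_add_one hAne]; ring_nf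
  have hθq : θ ^ q = θ ^ (q - 1) * θ := by
    rw [← Real.rpow_add_one hθ.ne']; ring_nf
  have h13v : θ ^ ((1:ℝ)/3 - 1) = t / θ := by
    rw [ht, ← Real.rpow_sub_one hθ.ne']
  have hγ : (1 - σ^2/2) ≠ 0 := fun h => h2 (by linarith)
  rw [eq_div_iff (mul_ne_zero hθ.ne' hAne)]
  rw [hAp, hθq, h13v, hp, hq]
  generalize A ^ (p - 1) = X
  generalize θ ^ (q - 1) = Y
  clear_value t A
  have h2σ : (2:ℝ) - σ^2 ≠ 0 := sub_ne_zero_of_ne (Ne.symm h2)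
  have hAe : (1 - σ^2/2 * (1 - μ * t)) ≠ 0 := hAdef ▸ hAne
  rw [hAdef]
  field_simp
  ring
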